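/- arXiv:1903.12601 — 3 statements merged into one kernel-verified Lean document; each statement's English description precedes it below -/
import Mathlib

section
/- Let B be a real symmetric positive semidefinite n×n matrix and 0 < α < 1/ρ(B). With C = ∑_{t=0}^{T-1}(I - αB)^t and M = C⁻¹(I - αB)^T, the matrix M is symmetric positive definite and satisfies ((1-αρ(B))^T / ∑_{t=0}^{T-1}(1-αρ(B))^t) · I ⪯ M ⪯ (1/T) · I. -/
/-!
Diagonalise `B = U diag(λ) Uᵀ`. Then `M = U diag(f r) Uᵀ` with `r = 1 - αλ ∈ [1 - αρ, 1]` and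
`f x = x ^ T / ∑_{t<T} x ^ t`, so the three claims follow from `f` being positive and monotone
on `[0, ∞)`, since `f 1 = 1 / T`.
-/

open Finset Matrix Unitary

section GeomSum

variable {K : Type*} [Field K] [LinearOrder K] [IsStrictOrderedRing K]

lemma pow_mul_pow_le_pow_mul_pow {a b : K} (ha : 0 ≤ a) (hab : a ≤ b) {t T : ℕ} (ht : t ≤ T) :
    a ^ T * b ^ t ≤ b ^ T * a ^ t := by
  obtain ⟨s, rfl⟩ := Nat.exists_eq_add_of_le ht
  have hb : 0 ≤ b := ha.trans hab
  calc a ^ (t + s) * b ^ t = a ^ s * (a ^ t * b ^ t) := by ring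
    _ ≤ b ^ s * (a ^ t * b ^ t) := by gcongr
    _ = b ^ (t + s) * a ^ t := by ring

lemma monotoneOn_pow_div_geom_sum {T : ℕ} (hT : T ≠ 0) :
    MonotoneOn (fun x : K => x ^ T / ∑ t ∈ range T, x ^ t) (Set.Ici 0) := by
  intro a ha b hb hab
  rw [div_le_div_iff₀ (geom_sum_pos ha hT) (geom_sum_pos hb hT), mul_sum, mul_sum]
  exact sum_le_sum fun t ht => pow_mul_pow_le_pow_mul_pow ha hab (mem_range.mp ht).le

end GeomSum

namespace Matrix

variable {n R : Type*} [Fintype n] [DecidableEq n]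

def conjDiagonal [CommSemiring R] [StarRing R] (u : unitary (Matrix n n R)) :
    (n → R) →ₐ[R] Matrix n n R :=
  (conjStarAlgAut R _ u).toAlgEquiv.toAlgHom.comp (diagonalAlgHom R)

lemma conjDiagonal_apply [CommSemiring R] [StarRing R] (u : unitary (Matrix n n R)) (d : n → R) :
    conjDiagonal u d = u * diagonal d * star (u : Matrix n n R) := rfl

lemma smul_one_eq_conjDiagonal [CommSemiring R] [StarRing R] (u : unitary (Matrix n n R))
    (c : R) : c • (1 : Matrix n n R) = conjDiagonal u (fun _ => c) := by
  rw [← Algebra.algebraMap_eq_smul_one, ← (conjDiagonal u).commutes]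
  rfl

section Order

variable [CommRing R] [PartialOrder R] [StarRing R] [StarOrderedRing R]
  {u : unitary (Matrix n n R)} {d : n → R}

lemma posSemidef_conjDiagonal_iff : (conjDiagonal u d).PosSemidef ↔ ∀ i, 0 ≤ d i := by
  rw [conjDiagonal_apply, isUnit_coe.posSemidef_star_right_conjugate_iff, posSemidef_diagonal_iff]

lemma posDef_conjDiagonal_iff [NoZeroDivisors R] [Nontrivial R] :
    (conjDiagonal u d).PosDef ↔ ∀ i, 0 < d i := by
  rw [conjDiagonal_apply, isUnit_coe.posDef_star_right_conjugate_iff, posDef_diagonal_iff]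

lemma posSemidef_conjDiagonal_sub_smul_one_iff {c : R} :
    (conjDiagonal u d - c • 1).PosSemidef ↔ ∀ i, c ≤ d i := by
  simp only [smul_one_eq_conjDiagonal u, ← map_sub, posSemidef_conjDiagonal_iff, Pi.sub_apply,
    sub_nonneg]

lemma posSemidef_smul_one_sub_conjDiagonal_iff {c : R} :
    (c • 1 - conjDiagonal u d).PosSemidef ↔ ∀ i, d i ≤ c := by
  simp only [smul_one_eq_conjDiagonal u, ← map_sub, posSemidef_conjDiagonal_iff, Pi.sub_apply,
    sub_nonneg]

end Order

section Field

variable {K : Type*} [Field K] [StarRing K] {u : unitary (Matrix n n K)}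

lemma conjDiagonal_inv {d : n → K} (hd : ∀ i, d i ≠ 0) :
    (conjDiagonal u d)⁻¹ = conjDiagonal u d⁻¹ := by
  refine inv_eq_left_inv ?_
  rw [← map_mul, ← map_one (conjDiagonal u)]
  congr 1
  ext i
  exact inv_mul_cancel₀ (hd i)

lemma inv_geom_sum_mul_pow_conjDiagonal {r : n → K} {T : ℕ}
    (hr : ∀ i, ∑ t ∈ range T, r i ^ t ≠ 0) :
    (∑ t ∈ range T, conjDiagonal u r ^ t)⁻¹ * conjDiagonal u r ^ T =
      conjDiagonal u (fun i => r i ^ T / ∑ t ∈ range T, r i ^ t) := by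
  simp only [← map_pow, ← map_sum]
  rw [conjDiagonal_inv (by simpa using hr), ← map_mul]
  congr 1
  ext i
  simp [div_eq_inv_mul]

end Field

lemma IsHermitian.eq_conjDiagonal_eigenvalues {A : Matrix n n ℝ} (hA : A.IsHermitian) :
    A = conjDiagonal hA.eigenvectorUnitary hA.eigenvalues :=
  hA.spectral_theorem

end Matrix

theorem stmt_4 {n : ℕ} (B : Matrix (Fin n) (Fin n) ℝ) (hB : B.PosSemidef)
    (ρ : ℝ) (hρ : IsGreatest {x : ℝ | ∃ i, hB.1.eigenvalues i = x} ρ)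
    (α : ℝ) (hα0 : 0 < α) (hα : α < 1 / ρ) (T : ℕ) (hT : 0 < T) :
    let C : Matrix (Fin n) (Fin n) ℝ :=
      ∑ t ∈ Finset.range T, ((1 : Matrix (Fin n) (Fin n) ℝ) - α • B) ^ t
    let M : Matrix (Fin n) (Fin n) ℝ :=
      C⁻¹ * ((1 : Matrix (Fin n) (Fin n) ℝ) - α • B) ^ T
    M.PosDef ∧
    (M - ((1 - α * ρ) ^ T / ∑ t ∈ Finset.range T, (1 - α * ρ) ^ t) •
        (1 : Matrix (Fin n) (Fin n) ℝ)).PosSemidef ∧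
    (((1 : ℝ) / T) • (1 : Matrix (Fin n) (Fin n) ℝ) - M).PosSemidef := by
  intro C M
  set r : Fin n → ℝ := 1 - α • hB.1.eigenvalues
  obtain ⟨⟨i₀, hi₀⟩, hρ_max⟩ := hρ
  have hρ_pos : 0 < ρ := by
    refine (hi₀ ▸ hB.eigenvalues_nonneg i₀).lt_of_ne fun h => ?_
    rw [← h, div_zero] at hα
    exact hα.not_gt hα0
  have hαρ : 0 < 1 - α * ρ := sub_pos.mpr ((lt_div_iff₀ hρ_pos).mp hα)
  have hr_lower (i : Fin n) : 1 - α * ρ ≤ r i :=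
    sub_le_sub_left (mul_le_mul_of_nonneg_left (hρ_max ⟨i, rfl⟩) hα0.le) 1
  have hr_upper (i : Fin n) : r i ≤ 1 :=
    sub_le_self 1 (mul_nonneg hα0.le (hB.eigenvalues_nonneg i))
  have hr_pos (i : Fin n) : 0 < r i := hαρ.trans_le (hr_lower i)
  have hM : M = conjDiagonal hB.1.eigenvectorUnitary
      (fun i => r i ^ T / ∑ t ∈ range T, r i ^ t) := by
    have hA : 1 - α • B = conjDiagonal hB.1.eigenvectorUnitary r := by
      conv_lhs => rw [hB.1.eq_conjDiagonal_eigenvalues]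
      simp only [r, map_sub, map_one, map_smul]
    rw [← inv_geom_sum_mul_pow_conjDiagonal fun i => (geom_sum_pos (hr_pos i).le hT.ne').ne', ← hA]
  have hmono := monotoneOn_pow_div_geom_sum (K := ℝ) hT.ne'
  refine ⟨?_, ?_, ?_⟩
  · rw [hM, posDef_conjDiagonal_iff]
    exact fun i => div_pos (pow_pos (hr_pos i) T) (geom_sum_pos (hr_pos i).le hT.ne')
  · rw [hM, posSemidef_conjDiagonal_sub_smul_one_iff]
    exact fun i => hmono (Set.mem_Ici.mpr hαρ.le) (Set.mem_Ici.mpr (hr_pos i).le) (hr_lower i)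
  · rw [hM, posSemidef_smul_one_sub_conjDiagonal_iff]
    intro i
    simpa using hmono (Set.mem_Ici.mpr (hr_pos i).le) (Set.mem_Ici.mpr zero_le_one) (hr_upper i)
end

section
/- Let B be a real symmetric positive semidefinite n×n matrix and 0 < α < 1/ρ(B). With C = ∑_{t=0}^{T-1}(I - αB)^t, M = C⁻¹(I - αB)^T, and N = (1/α)(C⁻¹ - M), the matrix N is symmetric positive semidefinite. -/
/-!
With A = I - αB, the geometric sum gives C(I - A) = I - A^T, so once C is invertible
C⁻¹ - C⁻¹A^T = I - A = αB and N = B. The matrix C is invertible because, by the functional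
calculus, its eigenvalues are ∑_{t<T} (1 - αλ)^t over the eigenvalues λ ≤ ρ of B, and these
are positive since αλ < 1.
-/

open Finset

theorem isUnit_geom_sum_one_sub_smul {A : Type*} [Ring A] [StarRing A] [TopologicalSpace A]
    [Algebra ℝ A] [ContinuousFunctionalCalculus ℝ A IsSelfAdjoint] {a : A} (ha : IsSelfAdjoint a)
    {α : ℝ} (hα : ∀ x ∈ spectrum ℝ a, α * x < 1) {T : ℕ} (hT : 0 < T) :
    IsUnit (∑ t ∈ range T, (1 - α • a) ^ t) := by
  have hcfc : ∑ t ∈ range T, (1 - α • a) ^ t = cfc (fun x => ∑ t ∈ range T, (1 - α * x) ^ t) a :=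
    calc ∑ t ∈ range T, (1 - α • a) ^ t
        = ∑ t ∈ range T, cfc (fun x => (1 - α * x) ^ t) a := sum_congr rfl fun t _ => by
          rw [cfc_pow (fun x => 1 - α * x) t a, cfc_sub (fun _ => 1) (α * ·) a, cfc_const_one ℝ a,
            cfc_const_mul_id α a]
      _ = cfc (fun x => ∑ t ∈ range T, (1 - α * x) ^ t) a := by
          rw [← cfc_sum (fun t x => (1 - α * x) ^ t) a, sum_fn]
  rw [hcfc, isUnit_cfc_iff _ a]
  intro x hx
  have hpos : 0 < 1 - α * x := sub_pos.mpr (hα x hx)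
  exact (sum_pos (fun t _ => pow_pos hpos t) (nonempty_range_iff.mpr hT.ne')).ne'

theorem Matrix.inv_geom_sum_sub_inv_geom_sum_mul_pow {n R : Type*} [Fintype n] [DecidableEq n]
    [CommRing R] (A : Matrix n n R) (T : ℕ) (h : IsUnit (∑ t ∈ range T, A ^ t)) :
    (∑ t ∈ range T, A ^ t)⁻¹ - (∑ t ∈ range T, A ^ t)⁻¹ * A ^ T = 1 - A := by
  rw [← mul_one_sub, ← geom_sum_mul_neg, ← mul_assoc,
    Matrix.nonsing_inv_mul _ ((Matrix.isUnit_iff_isUnit_det _).mp h), one_mul]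

theorem stmt_5 {n : ℕ} (B : Matrix (Fin n) (Fin n) ℝ) (hB : B.PosSemidef)
    (ρ : ℝ) (hρ : IsGreatest {x : ℝ | ∃ i, hB.1.eigenvalues i = x} ρ)
    (α : ℝ) (hα0 : 0 < α) (hα : α < 1 / ρ) (T : ℕ) (hT : 0 < T) :
    let C : Matrix (Fin n) (Fin n) ℝ :=
      ∑ t ∈ Finset.range T, ((1 : Matrix (Fin n) (Fin n) ℝ) - α • B) ^ t
    let M : Matrix (Fin n) (Fin n) ℝ :=
      C⁻¹ * ((1 : Matrix (Fin n) (Fin n) ℝ) - α • B) ^ T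
    (α⁻¹ • (C⁻¹ - M)).PosSemidef := by
  intro C M
  have hαρ : α * ρ < 1 := (lt_div_iff₀ (one_div_pos.mp (hα0.trans hα))).mp hα
  have hspec : ∀ x ∈ spectrum ℝ B, α * x < 1 := by
    intro x hx
    obtain ⟨i, rfl⟩ := hB.1.spectrum_real_eq_range_eigenvalues ▸ hx
    exact (mul_le_mul_of_nonneg_left (hρ.2 ⟨i, rfl⟩) hα0.le).trans_lt hαρ
  have hCM : C⁻¹ - M = α • B := by
    rw [Matrix.inv_geom_sum_sub_inv_geom_sum_mul_pow _ T
      (isUnit_geom_sum_one_sub_smul hB.1 hspec hT), sub_sub_cancel]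
  rwa [hCM, inv_smul_smul₀ hα0.ne']
end

section
/- Let L, η, ρ > 0 with ρ being a positive real (eigenvalue bound), T ≥ 1 an integer, and suppose 0 < α < (1 - (L²/(L² + ηρ))^{1/T})/ρ. Then (1-αρ)^T/(1-(1-αρ)^T) · αρ - α L²/η > 0. -/
/-!
With `q = 1 - αρ`, the bound on `α` says `(L² / (L² + ηρ))^(1/T) < q`, i.e. `L² / (L² + ηρ) < q^T`.
The odds map `x ↦ x / (1 - x)` is increasing below `1` and sends `L² / (L² + ηρ)` to `L² / (ηρ)`,
so `L² / (ηρ) < q^T / (1 - q^T)`; multiplying by `αρ > 0` gives the claim.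
-/

lemma lt_pow_of_rpow_one_div_lt {b q : ℝ} {n : ℕ} (hb : 0 ≤ b) (hn : n ≠ 0)
    (h : b ^ ((1 : ℝ) / n) < q) : b < q ^ n := by
  have hq : 0 ≤ q := (Real.rpow_nonneg hb _).trans h.le
  rwa [one_div, Real.rpow_inv_lt_iff_of_pos hb hq (by positivity), Real.rpow_natCast] at h

lemma div_lt_div_one_sub_of_div_add_lt {a b x : ℝ} (ha : 0 ≤ a) (hb : 0 < b) (hx : x < 1)
    (h : a / (a + b) < x) : a / b < x / (1 - x) := by
  rw [div_lt_iff₀ (by positivity)] at h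
  rw [div_lt_div_iff₀ hb (by linarith)]
  linarith

theorem stmt_14_general (L η ρ : ℝ) (hη : 0 < η) (hρ : 0 < ρ)
    (T : ℕ) (hT : 0 < T) (α : ℝ) (hα0 : 0 < α)
    (hα : α < (1 - (L ^ 2 / (L ^ 2 + η * ρ)) ^ ((1 : ℝ) / T)) / ρ) :
    0 < (1 - α * ρ) ^ T / (1 - (1 - α * ρ) ^ T) * (α * ρ) - α * L ^ 2 / η := by
  set q := 1 - α * ρ
  have hαρ : 0 < α * ρ := mul_pos hα0 hρ
  have hroot : (L ^ 2 / (L ^ 2 + η * ρ)) ^ ((1 : ℝ) / T) < q := by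
    rw [lt_div_iff₀ hρ] at hα
    linarith
  have hq : 0 ≤ q := (Real.rpow_nonneg (by positivity) _).trans hroot.le
  have hqT : L ^ 2 / (L ^ 2 + η * ρ) < q ^ T :=
    lt_pow_of_rpow_one_div_lt (by positivity) hT.ne' hroot
  have hqT1 : q ^ T < 1 := pow_lt_one₀ hq (by linarith) hT.ne'
  have hodds := div_lt_div_one_sub_of_div_add_lt (sq_nonneg L) (mul_pos hη hρ) hqT1 hqT
  calc 0 < α * ρ * (q ^ T / (1 - q ^ T) - L ^ 2 / (η * ρ)) := mul_pos hαρ (sub_pos.2 hodds)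
    _ = q ^ T / (1 - q ^ T) * (α * ρ) - α * L ^ 2 / η := by field_simp

theorem stmt_14 (L η ρ : ℝ) (hL : 0 < L) (hη : 0 < η) (hρ : 0 < ρ)
    (T : ℕ) (hT : 0 < T) (α : ℝ) (hα0 : 0 < α)
    (hα : α < (1 - (L ^ 2 / (L ^ 2 + η * ρ)) ^ ((1 : ℝ) / T)) / ρ) :
    0 < (1 - α * ρ) ^ T / (1 - (1 - α * ρ) ^ T) * (α * ρ) - α * L ^ 2 / η :=
  stmt_14_general L η ρ hη hρ T hT α hα0 hα
end
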